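/- In the clocked λ-calculus, the depth of the τ-prefix is non-decreasing under reduction at the root: if τⁿ(M) ↠c N and N is of the form τᵐ(N') with N' not of the form τ(_), then m ≥ n. -/
import Mathlib


/-- clocked λ-terms: λ-terms with an extra unary constructor τ -/
inductive CLam : Type
  | var : Nat → CLam
  | app : CLam → CLam → CLam
  | lam : CLam → CLam
  | tau : CLam → CLam
deriving DecidableEq

namespace CLam

def lift (d : Nat) : CLam → CLam
  | var n => if n < d then var n else var (n+1)
  | app M N => app (lift d M) (lift d N)
  | lam M => lam (lift (d+1) M)
  | tau M => tau (lift d M)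

def subst (k : Nat) (N : CLam) : CLam → CLam
  | var n => if n = k then N else if k < n then var (n-1) else var n
  | app A B => app (subst k N A) (subst k N B)
  | lam A => lam (subst (k+1) (lift 0 N) A)
  | tau A => tau (subst k N A)

/-- one-step clocked reduction: compatible closure of
    (λ.M)N → τ(M[0:=N]) and (τ M)N → τ(M N) -/
inductive CStep : CLam → CLam → Prop
  | beta (M N : CLam) : CStep (app (lam M) N) (tau (subst 0 N M))
  | tauApp (M N : CLam) : CStep (app (tau M) N) (tau (app M N))
  | appL {M M'} (N) : CStep M M' → CStep (app M N) (app M' N)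
  | appR (M) {N N'} : CStep N N' → CStep (app M N) (app M N')
  | lam {M M'} : CStep M M' → CStep (lam M) (lam M')
  | tau {M M'} : CStep M M' → CStep (tau M) (tau M')

abbrev CStar : CLam → CLam → Prop := Relation.ReflTransGen CStep

/-- n-fold τ -/
def tauN : Nat → CLam → CLam
  | 0, M => M
  | n+1, M => tau (tauN n M)

end CLam

open CLam

def tdepth : CLam → Nat
  | CLam.tau M => tdepth M + 1
  | _ => 0

lemma step_tdepth {A B : CLam} (h : CStep A B) : tdepth A ≤ tdepth B := by
  induction h with
  | beta M N => simp [tdepth]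
  | tauApp M N => simp [tdepth]
  | appL N _ _ => simp [tdepth]
  | appR M _ _ => simp [tdepth]
  | lam _ _ => simp [tdepth]
  | tau _ ih => simpa [tdepth] using ih

lemma star_tdepth {A B : CLam} (h : CStar A B) : tdepth A ≤ tdepth B := by
  induction h with
  | refl => exact le_rfl
  | tail _ hs ih => exact ih.trans (step_tdepth hs)

lemma tdepth_tauN (n : Nat) (M : CLam) : tdepth (tauN n M) = n + tdepth M := by
  induction n with
  | zero => simp [tauN]
  | succ k ih => simp [tauN, tdepth, ih]; omega

/-- the root τ-prefix depth never decreases under clocked reduction -/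
theorem tau_prefix_monotone :
    ∀ (n m : Nat) (M N' : CLam), CStar (tauN n M) (tauN m N') →
      (∀ P : CLam, N' ≠ CLam.tau P) → n ≤ m := by
  intro n m M N' h hN
  have h1 := star_tdepth h
  have h2 : tdepth N' = 0 := by
    cases N' with
    | tau P => exact absurd rfl (hN P)
    | var k => rfl
    | app a b => rfl
    | lam a => rfl
  rw [tdepth_tauN, tdepth_tauN, h2] at h1
  omega
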